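/- arXiv:1507.05038 — 5 statements merged into one kernel-verified Lean document; each statement's English description precedes it below -/
import Mathlib

section
/- If two symmetric 2×2 matrices A = [a, b; b, a] and C = [c, d; d, c] (with complex entries) both satisfy the fixed-point property a² - b² = λ and c² - d² = λ, and a + c ≠ 0, then the matrix obtained by assembling A and C at a shared node and eliminating the interior degree of freedom (Schur complement) also satisfies the fixed-point property: its diagonal entry squared minus its off-diagonal entry squared equals λ. -/
/-!
Write `s = a + c`. Substituting `b² = a² - λ` turns the first diagonal entry into
`(a c + λ) / s`, which is symmetric in `a` and `c`, so both diagonal entries agree. The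
off-diagonal entry squared is `(a² - λ)(c² - λ) / s²`, and
`(a c + λ)² - (a² - λ)(c² - λ) = λ s²`.
-/

variable {K : Type*} [Field K]

theorem sub_sq_div_add_eq_mul_add_div {a b c lam : K} (hA : a ^ 2 - b ^ 2 = lam)
    (hac : a + c ≠ 0) :
    a - b ^ 2 / (a + c) = (a * c + lam) / (a + c) := by
  rw [eq_div_iff hac, sub_mul, div_mul_cancel₀ _ hac]
  linear_combination hA

theorem mul_add_sq_sub_mul_sq {a b c d lam : K} (hA : a ^ 2 - b ^ 2 = lam)
    (hC : c ^ 2 - d ^ 2 = lam) :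
    (a * c + lam) ^ 2 - (b * d) ^ 2 = lam * (a + c) ^ 2 := by
  linear_combination d ^ 2 * hA + (a ^ 2 - lam) * hC

theorem stmt_3 (a b c d lam : ℂ) (hA : a ^ 2 - b ^ 2 = lam) (hC : c ^ 2 - d ^ 2 = lam)
    (hac : a + c ≠ 0) :
    (a - b ^ 2 / (a + c)) ^ 2 - (-(b * d) / (a + c)) ^ 2 = lam ∧
      a - b ^ 2 / (a + c) = c - d ^ 2 / (a + c) := by
  have hca : c + a ≠ 0 := by rwa [add_comm]
  have hd : c - d ^ 2 / (a + c) = (a * c + lam) / (a + c) := by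
    rw [add_comm a c, mul_comm a c]
    exact sub_sq_div_add_eq_mul_add_div hC hca
  rw [sub_sq_div_add_eq_mul_add_div hA hac, hd]
  refine ⟨?_, rfl⟩
  rw [neg_div, neg_sq, div_pow, div_pow, ← sub_div, mul_add_sq_sub_mul_sq hA hC,
    mul_div_cancel_right₀ _ (pow_ne_zero 2 hac)]
end

section
/- Let k = k_R + i k_I ∈ ℂ with k_R > 0, and let L = L_R + i L_I ∈ ℂ with L_R > 0, kL ≠ 2, kL̄ ≠ 2. Then |((1 + kL/2)/(1 - kL/2))·((1 + kL̄/2)/(1 - kL̄/2))| > 1. -/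
theorem stmt_10 (k L : ℂ) (hk : 0 < k.re) (hL : 0 < L.re)
    (h1 : k * L ≠ 2) (h2 : k * (starRingEnd ℂ) L ≠ 2) :
    1 < ‖(1 + k * L / 2) / (1 - k * L / 2) *
      ((1 + k * (starRingEnd ℂ) L / 2) / (1 - k * (starRingEnd ℂ) L / 2))‖ := by
  have hd1 : (1 - k * L / 2) ≠ 0 := by
    intro h
    exact h1 (by linear_combination -2 * h)
  have hd2 : (1 - k * (starRingEnd ℂ) L / 2) ≠ 0 := by
    intro h
    exact h2 (by linear_combination -2 * h)
  have hsq : Complex.normSq ((2 - k * L) * (2 - k * (starRingEnd ℂ) L)) <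
      Complex.normSq ((2 + k * L) * (2 + k * (starRingEnd ℂ) L)) := by
    simp only [Complex.normSq_apply, Complex.mul_re, Complex.mul_im, Complex.add_re,
      Complex.add_im, Complex.sub_re, Complex.sub_im, Complex.one_re, Complex.one_im,
      Complex.re_ofNat, Complex.im_ofNat, Complex.conj_re, Complex.conj_im]
    set a := k.re; set b := k.im; set c := L.re; set d := L.im
    ring_nf
    nlinarith [mul_pos hk hL,
      mul_nonneg (mul_pos hk hL).le (sq_nonneg (a*d + b*c)),
      mul_nonneg (mul_pos hk hL).le (sq_nonneg (a*d - b*c)),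
      mul_nonneg (mul_pos hk hL).le (sq_nonneg (a*c - b*d)),
      mul_nonneg (mul_pos hk hL).le (sq_nonneg (a*c + b*d))]
  have habs : ‖(2 - k * L) * (2 - k * (starRingEnd ℂ) L)‖ <
      ‖(2 + k * L) * (2 + k * (starRingEnd ℂ) L)‖ := by
    rw [Complex.norm_def, Complex.norm_def]
    exact Real.sqrt_lt_sqrt (Complex.normSq_nonneg _) hsq
  have key : ‖(1 - k * L / 2) * (1 - k * (starRingEnd ℂ) L / 2)‖ <
      ‖(1 + k * L / 2) * (1 + k * (starRingEnd ℂ) L / 2)‖ := by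
    have e1 : (1 + k * L / 2) * (1 + k * (starRingEnd ℂ) L / 2) =
        (2 + k * L) * (2 + k * (starRingEnd ℂ) L) / 4 := by ring
    have e2 : (1 - k * L / 2) * (1 - k * (starRingEnd ℂ) L / 2) =
        (2 - k * L) * (2 - k * (starRingEnd ℂ) L) / 4 := by ring
    rw [e1, e2, norm_div, norm_div]
    gcongr
    norm_num
  have hdpos : 0 < ‖(1 - k * L / 2) * (1 - k * (starRingEnd ℂ) L / 2)‖ :=
    norm_pos_iff.mpr (mul_ne_zero hd1 hd2)
  have heq : (1 + k * L / 2) / (1 - k * L / 2) *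
      ((1 + k * (starRingEnd ℂ) L / 2) / (1 - k * (starRingEnd ℂ) L / 2)) =
      ((1 + k * L / 2) * (1 + k * (starRingEnd ℂ) L / 2)) /
      ((1 - k * L / 2) * (1 - k * (starRingEnd ℂ) L / 2)) :=
    div_mul_div_comm _ _ _ _
  rw [heq, norm_div, lt_div_iff₀ hdpos, one_mul]
  exact key
end

section
/- Let k = k_R + i k_I ∈ ℂ with k_R < 0, and let L = L_R + i L_I ∈ ℂ with L_R > 0, kL ≠ 2, kL̄ ≠ 2. Then |((1 + kL/2)/(1 - kL/2))·((1 + kL̄/2)/(1 - kL̄/2))| < 1. -/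
/-!
With `w = kL/2` and `w' = k L̄/2` the expression is the product of the Cayley transforms
`(1 + w)/(1 - w)` and `(1 + w')/(1 - w')`. Since `|1 ± w|² = 1 + |w|² ± 2 Re w` and `|w| = |w'|`,
the product of the squared numerators falls short of that of the squared denominators by
`4 (1 + |w|²) (Re w + Re w')`, and `Re w + Re w' = Re k · Re L < 0`. Neither factor need lie in
the unit disc on its own.
-/

open Complex ComplexConjugate

namespace Complex

theorem normSq_one_add (w : ℂ) : normSq (1 + w) = 1 + normSq w + 2 * w.re := by
  simp [normSq_add]

theorem normSq_one_sub (w : ℂ) : normSq (1 - w) = 1 + normSq w - 2 * w.re := by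
  simp [normSq_sub]

theorem norm_one_add_mul_lt_norm_one_sub_mul {w w' : ℂ} (hnorm : ‖w‖ = ‖w'‖)
    (hre : w.re + w'.re < 0) : ‖(1 + w) * (1 + w')‖ < ‖(1 - w) * (1 - w')‖ := by
  have hsq : normSq w' = normSq w := by
    rw [← Complex.sq_norm, ← Complex.sq_norm, hnorm]
  have hs : 0 < 1 + normSq w := add_pos_of_pos_of_nonneg one_pos (normSq_nonneg w)
  refine lt_of_pow_lt_pow_left₀ 2 (norm_nonneg _) ?_
  simp only [Complex.sq_norm, normSq_mul, normSq_one_add, normSq_one_sub, hsq]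
  nlinarith [mul_neg_of_pos_of_neg hs hre]

theorem norm_cayley_mul_cayley_lt_one {w w' : ℂ} (hnorm : ‖w‖ = ‖w'‖)
    (hre : w.re + w'.re < 0) : ‖(1 + w) / (1 - w) * ((1 + w') / (1 - w'))‖ < 1 := by
  have h := norm_one_add_mul_lt_norm_one_sub_mul hnorm hre
  rw [div_mul_div_comm, norm_div]
  exact (div_lt_one ((norm_nonneg _).trans_lt h)).2 h

end Complex

theorem stmt_11_general (k L : ℂ) (hk : k.re < 0) (hL : 0 < L.re) :
    ‖(1 + k * L / 2) / (1 - k * L / 2) *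
      ((1 + k * (starRingEnd ℂ) L / 2) / (1 - k * (starRingEnd ℂ) L / 2))‖ < 1 := by
  apply norm_cayley_mul_cayley_lt_one
  · simp only [norm_div, norm_mul, norm_conj]
  · have hre : (k * L / 2).re + (k * conj L / 2).re = k.re * L.re := by
      simp only [div_ofNat_re, mul_re, conj_re, conj_im]
      ring
    rw [hre]
    exact mul_neg_of_neg_of_pos hk hL

theorem stmt_11 (k L : ℂ) (hk : k.re < 0) (hL : 0 < L.re)
    (h1 : k * L ≠ 2) (h2 : k * (starRingEnd ℂ) L ≠ 2) :
    ‖(1 + k * L / 2) / (1 - k * L / 2) *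
      ((1 + k * (starRingEnd ℂ) L / 2) / (1 - k * (starRingEnd ℂ) L / 2))‖ < 1 :=
  stmt_11_general k L hk hL
end

section
/- Let k² ∈ ℝ, and let L ∈ ℂ be nonzero with conjugate L̄. Define a = 1/L + k²L/4, b = -1/L + k²L/4, ā, b̄ their conjugates, and assume Re(a) ≠ 0. Then the Schur complement of the 3×3 assembled matrix [a, b, 0; b, a+ā, b̄; 0, b̄, ā] eliminating the middle variable equals (1/(2Re(a)))·[k² + |a|², -|b|²; -|b|², k² + |a|²], which is a real symmetric matrix. -/
/-!
With `a = 1/L + k²L/4` and `b = -1/L + k²L/4` one has the fixed-point identity `a² - b² = k²`,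
and, `k²` being real, also `ā² - b̄² = k²`. Eliminating the middle unknown divides by the
middle pivot `a + ā = 2 Re a`, and the identity turns the diagonal entries into
`a - b²/(a + ā) = (a² - b² + a ā)/(a + ā) = (k² + |a|²)/(2 Re a)`, and likewise for `ā`.
-/

open ComplexConjugate

theorem sq_sub_sq_eq_of_eq_inv_add {F : Type*} [Field F] {L k a b : F} (h2 : (2 : F) ≠ 0)
    (hL : L ≠ 0) (ha : a = 1 / L + k * L / 4) (hb : b = -(1 / L) + k * L / 4) :
    a ^ 2 - b ^ 2 = k := by
  subst ha hb
  have h4 : (4 : F) ≠ 0 := by simpa [show (4 : F) = 2 * 2 by norm_num] using h2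
  field_simp
  ring

theorem sub_mul_div_eq_of_sq_sub_sq {F : Type*} [Field F] {a b c k : F}
    (hk : a ^ 2 - b ^ 2 = k) (hac : a + c ≠ 0) :
    a - b * b / (a + c) = (k + a * c) / (a + c) := by
  field_simp
  linear_combination hk

theorem stmt_14 (k2 : ℝ) (L : ℂ) (hL : L ≠ 0) (a b : ℂ)
    (ha : a = 1 / L + (k2 : ℂ) * L / 4) (hb : b = -(1 / L) + (k2 : ℂ) * L / 4)
    (hre : a.re ≠ 0) :
    !![a - b * b / (a + (starRingEnd ℂ) a), -(b * (starRingEnd ℂ) b) / (a + (starRingEnd ℂ) a);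
       -((starRingEnd ℂ) b * b) / (a + (starRingEnd ℂ) a),
         (starRingEnd ℂ) a - (starRingEnd ℂ) b * (starRingEnd ℂ) b / (a + (starRingEnd ℂ) a)] =
      (1 / (2 * (a.re : ℂ))) •
        !![(k2 : ℂ) + ((‖a‖ : ℝ) : ℂ) ^ 2, -(((‖b‖ : ℝ) : ℂ) ^ 2);
           -(((‖b‖ : ℝ) : ℂ) ^ 2), (k2 : ℂ) + ((‖a‖ : ℝ) : ℂ) ^ 2] := by
  have hk : a ^ 2 - b ^ 2 = k2 := sq_sub_sq_eq_of_eq_inv_add two_ne_zero hL ha hb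
  have hk' : conj a ^ 2 - conj b ^ 2 = k2 := by simpa using congrArg conj hk
  have hpivot : a + conj a = 2 * (a.re : ℂ) := by rw [Complex.add_conj]; push_cast; ring
  have hpivot0 : a + conj a ≠ 0 := by rw [hpivot]; exact_mod_cast mul_ne_zero two_ne_zero hre
  have hdiag : conj a - conj b * conj b / (a + conj a) = (k2 + conj a * a) / (a + conj a) := by
    rw [add_comm a]
    exact sub_mul_div_eq_of_sq_sub_sq hk' (by rwa [add_comm])
  rw [sub_mul_div_eq_of_sq_sub_sq hk hpivot0, hdiag, hpivot, Complex.mul_conj' a,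
    Complex.conj_mul' a, Complex.mul_conj' b, Complex.conj_mul' b]
  ext i j
  fin_cases i <;> fin_cases j <;> simp <;> ring
end

section
/- Under the hypotheses of the preceding Hermitian-DtN statement, the determinant of the condensed 2×2 matrix S = (1/(2Re(a)))·[k² + |a|², -|b|²; -|b|², k² + |a|²] equals k², i.e., the condensed DtN map of the conjugate element pair again satisfies the fixed-point property S_diag² - S_off² = k². -/
/-!
Since `a - b = 2 / L` and `a + b = k² L / 2`, we have `a² - b² = k²`. For any complex `a`, `b`
with `b² = a² - k²` (`k²` real), `|b|⁴ = |a² - k²|² = |a|⁴ - 2 k² Re(a²) + k⁴`, so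
`(k² + |a|²)² - |b|⁴ = 2 k² (|a|² + Re(a²)) = k² (2 Re a)²`, which is the determinant identity
after dividing by `(2 Re a)²`.
-/

namespace Complex

lemma sq_norm_add_re_sq (a : ℂ) : ‖a‖ ^ 2 + (a ^ 2).re = 2 * a.re ^ 2 := by
  rw [Complex.sq_norm, normSq_apply, sq, mul_re]
  ring

lemma sq_norm_sq_of_sq_eq_sub_ofReal {a b : ℂ} {c : ℝ} (h : b ^ 2 = a ^ 2 - c) :
    (‖b‖ ^ 2) ^ 2 = (‖a‖ ^ 2) ^ 2 - 2 * c * (a ^ 2).re + c ^ 2 := by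
  have hb : (‖b‖ ^ 2) ^ 2 = normSq (a ^ 2 - c) := by
    rw [← norm_pow, ← h, Complex.sq_norm]
  rw [hb, Complex.sq_norm, normSq_apply, normSq_apply]
  simp only [sub_re, sub_im, ofReal_re, ofReal_im, sub_zero, sq, mul_re, mul_im]
  ring

lemma add_sq_norm_sq_sub_sq_norm_sq {a b : ℂ} {c : ℝ} (h : b ^ 2 = a ^ 2 - c) :
    (c + ‖a‖ ^ 2) ^ 2 - (‖b‖ ^ 2) ^ 2 = c * (2 * a.re) ^ 2 := by
  have hre := sq_norm_add_re_sq a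
  rw [sq_norm_sq_of_sq_eq_sub_ofReal h]
  linear_combination 2 * c * hre

end Complex

lemma sq_neg_inv_add_eq_sq_inv_add_sub {K : Type*} [Field K] [CharZero K] (c : K) {L : K}
    (hL : L ≠ 0) :
    (-(1 / L) + c * L / 4) ^ 2 = (1 / L + c * L / 4) ^ 2 - c := by
  field_simp
  ring

theorem stmt_15 (k2 : ℝ) (L : ℂ) (hL : L ≠ 0) (a b : ℂ)
    (ha : a = 1 / L + (k2 : ℂ) * L / 4) (hb : b = -(1 / L) + (k2 : ℂ) * L / 4)
    (hre : a.re ≠ 0) :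
    ((k2 + ‖a‖ ^ 2) / (2 * a.re)) ^ 2
      - (-(‖b‖ ^ 2) / (2 * a.re)) ^ 2 = k2 := by
  have hab : b ^ 2 = a ^ 2 - k2 := by
    rw [ha, hb]
    exact sq_neg_inv_add_eq_sq_inv_add_sub _ hL
  have h2re : (2 * a.re) ^ 2 ≠ 0 := by positivity
  rw [div_pow, div_pow, neg_sq, ← sub_div, Complex.add_sq_norm_sq_sub_sq_norm_sq hab,
    mul_div_cancel_right₀ _ h2re]
end
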